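/- arXiv:1709.07086 — 3 statements merged into one kernel-verified Lean document; each statement's English description precedes it below -/
import Mathlib

section
/- Let 0 → X →f E →g Y → 0 be a non-split short exact sequence of finitely generated A-modules with X indecomposable. Then for every direct sum decomposition E = E₁ ⊕ E₂ with E₁ nonzero, the coordinate morphism g∘ι₁ : E₁ → Y (the restriction of g to the summand E₁) is nonzero. -/
/-!
Suppose `g` vanishes on the summand `E₁`. Then `E₁ ⊆ ker g ≅ X`, and by the modular law `E₁` has
the complement `ker g ∩ E₂` inside `ker g`. As `X` is indecomposable and `E₁ ≠ 0`, this forces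
`ker g ∩ E₂ = 0`, so `E₂` is a complement of `ker g` in `E` and `g` restricts to an isomorphism
`E₂ ≅ Y`, whose inverse splits the sequence.
-/

/-- A module is indecomposable if it is nonzero and admits no direct sum
decomposition into two nonzero modules. -/
def IsIndec (A : Type) [Ring A] (M : ModuleCat.{0} A) : Prop :=
  Nontrivial M ∧ ∀ N₁ N₂ : ModuleCat.{0} A, Nontrivial N₁ → Nontrivial N₂ →
    IsEmpty (↥M ≃ₗ[A] ↥N₁ × ↥N₂)

/-- `pdLE A n M` : the module `M` has projective dimension at most `n`. -/
def pdLE (A : Type) [Ring A] : ℕ → ModuleCat.{0} A → Prop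
  | 0, M => Module.Projective A M
  | n + 1, M => ∃ (P : ModuleCat.{0} A) (f : ↥P →ₗ[A] ↥M),
      Module.Projective A ↥P ∧ Function.Surjective f ∧
      pdLE A n (ModuleCat.of A ↥(LinearMap.ker f))

/-- `idLE A n M` : the module `M` has injective dimension at most `n`. -/
def idLE (A : Type) [Ring A] : ℕ → ModuleCat.{0} A → Prop
  | 0, M => Module.Injective A M
  | n + 1, M => ∃ (I : ModuleCat.{0} A) (f : ↥M →ₗ[A] ↥I),
      Module.Injective A ↥I ∧ Function.Injective f ∧
      idLE A n (ModuleCat.of A (↥I ⧸ LinearMap.range f))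

/-- The (composition) length of a module, as the Krull dimension of its
submodule lattice (for finite length modules this is the usual length). -/
noncomputable def modLength (A : Type) [Ring A] (M : ModuleCat.{0} A) : WithBot ℕ∞ :=
  Order.krullDim (Submodule A ↥M)

/-- A torsion-free class: a class of finitely generated modules containing `0`,
closed under isomorphisms, submodules and extensions. -/
structure IsTorsionFreeClass (A : Type) [Ring A] (C : Set (ModuleCat.{0} A)) : Prop where
  fg : ∀ M ∈ C, Module.Finite A ↥M
  zero_mem : ModuleCat.of A PUnit ∈ C
  iso_closed : ∀ M N : ModuleCat.{0} A, M ∈ C → Nonempty (↥M ≃ₗ[A] ↥N) → N ∈ C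
  sub_closed : ∀ M ∈ C, ∀ S : Submodule A ↥M, ModuleCat.of A ↥S ∈ C
  ext_closed : ∀ (X E Y : ModuleCat.{0} A), X ∈ C → Y ∈ C →
    ∀ (f : ↥X →ₗ[A] ↥E) (g : ↥E →ₗ[A] ↥Y), Function.Injective f →
      Function.Surjective g → LinearMap.range f = LinearMap.ker g → E ∈ C

/-- A torsion class: a class of finitely generated modules containing `0`,
closed under isomorphisms, quotient modules and extensions. -/
structure IsTorsionClass (A : Type) [Ring A] (C : Set (ModuleCat.{0} A)) : Prop where
  fg : ∀ M ∈ C, Module.Finite A ↥M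
  zero_mem : ModuleCat.of A PUnit ∈ C
  iso_closed : ∀ M N : ModuleCat.{0} A, M ∈ C → Nonempty (↥M ≃ₗ[A] ↥N) → N ∈ C
  quot_closed : ∀ M ∈ C, ∀ S : Submodule A ↥M, ModuleCat.of A (↥M ⧸ S) ∈ C
  ext_closed : ∀ (X E Y : ModuleCat.{0} A), X ∈ C → Y ∈ C →
    ∀ (f : ↥X →ₗ[A] ↥E) (g : ↥E →ₗ[A] ↥Y), Function.Injective f →
      Function.Surjective g → LinearMap.range f = LinearMap.ker g → E ∈ C

/-- One step of a path in `ind A`: a nonzero morphism between finitely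
generated indecomposable modules. -/
def PathStep (A : Type) [Ring A] (X Y : ModuleCat.{0} A) : Prop :=
  IsIndec A X ∧ Module.Finite A ↥X ∧ IsIndec A Y ∧ Module.Finite A ↥Y ∧
    ∃ f : ↥X →ₗ[A] ↥Y, f ≠ 0

/-- `Y` is a predecessor of `X` in `ind A`: `Y` is finitely generated and
indecomposable, and there is a path (possibly of length `0`) from `Y` to `X`. -/
def IsPredecessor (A : Type) [Ring A] (Y X : ModuleCat.{0} A) : Prop :=
  IsIndec A Y ∧ Module.Finite A ↥Y ∧ Relation.ReflTransGen (PathStep A) Y X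

/-- `Z` is a successor of `X` in `ind A`: `Z` is finitely generated and
indecomposable, and there is a path (possibly of length `0`) from `X` to `Z`. -/
def IsSuccessor (A : Type) [Ring A] (Z X : ModuleCat.{0} A) : Prop :=
  IsIndec A Z ∧ Module.Finite A ↥Z ∧ Relation.ReflTransGen (PathStep A) X Z

open Submodule LinearMap

theorem IsIndec.eq_bot_or_eq_bot_of_isCompl {A : Type} [Ring A] {X : ModuleCat.{0} A}
    (hX : IsIndec A X) {M : Type} [AddCommGroup M] [Module A M] (φ : X ≃ₗ[A] M)
    {P Q : Submodule A M} (hPQ : IsCompl P Q) : P = ⊥ ∨ Q = ⊥ := by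
  by_contra! hne
  rw [← nontrivial_iff_ne_bot, ← nontrivial_iff_ne_bot] at hne
  exact (hX.2 (ModuleCat.of A P) (ModuleCat.of A Q) hne.1 hne.2).false
    (φ ≪≫ₗ (prodEquivOfIsCompl P Q hPQ).symm)

theorem IsIndec.disjoint_of_isCompl_of_le {A : Type} [Ring A] {X : ModuleCat.{0} A}
    (hX : IsIndec A X) {E : Type} [AddCommGroup E] [Module A E] {K M N : Submodule A E}
    (φ : X ≃ₗ[A] K) (hMN : IsCompl M N) (hMK : M ≤ K) (hM : M ≠ ⊥) : Disjoint N K := by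
  rw [disjoint_comm, disjoint_iff_comap_eq_bot]
  refine (hX.eq_bot_or_eq_bot_of_isCompl φ
    (isCompl_comap_subtype_of_isCompl_of_le hMN hMK)).resolve_left ?_
  rwa [← disjoint_iff_comap_eq_bot, disjoint_comm, disjoint_iff, inf_eq_left.mpr hMK]

theorem LinearMap.exists_rightInverse_of_isCompl_ker {A E Y : Type*} [Ring A]
    [AddCommGroup E] [Module A E] [AddCommGroup Y] [Module A Y] {g : E →ₗ[A] Y}
    (hg : Function.Surjective g) {N : Submodule A E} (h : IsCompl (ker g) N) :
    ∃ s : Y →ₗ[A] E, g ∘ₗ s = LinearMap.id := by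
  let φ := (quotientEquivOfIsCompl _ N h).symm ≪≫ₗ g.quotKerEquivOfSurjective hg
  refine ⟨N.subtype ∘ₗ φ.symm.toLinearMap, LinearMap.ext fun y ↦ ?_⟩
  obtain ⟨z, rfl⟩ := φ.surjective y
  simp only [LinearMap.comp_apply, LinearEquiv.coe_coe, φ.symm_apply_apply]
  simp [φ]

theorem LinearEquiv.isCompl_range_symm_comp_inl_inr {A E E₁ E₂ : Type*} [Ring A]
    [AddCommGroup E] [Module A E] [AddCommGroup E₁] [Module A E₁] [AddCommGroup E₂] [Module A E₂]
    (e : E ≃ₗ[A] E₁ × E₂) :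
    IsCompl (range (e.symm.toLinearMap ∘ₗ inl A E₁ E₂))
      (range (e.symm.toLinearMap ∘ₗ inr A E₁ E₂)) := by
  rw [LinearMap.range_comp, LinearMap.range_comp]
  exact (orderIsoMapComap e.symm).isCompl isCompl_range_inl_inr

theorem stmt0_general (A : Type) [Ring A]
    (X E Y : ModuleCat.{0} A)
    (f : ↥X →ₗ[A] ↥E) (g : ↥E →ₗ[A] ↥Y)
    (hf : Function.Injective f) (hg : Function.Surjective g)
    (hexact : LinearMap.range f = LinearMap.ker g)
    (hnonsplit : ¬ ∃ s : ↥Y →ₗ[A] ↥E, g ∘ₗ s = LinearMap.id)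
    (hX : IsIndec A X)
    (E₁ E₂ : ModuleCat.{0} A) (e : ↥E ≃ₗ[A] ↥E₁ × ↥E₂) (hE₁ : Nontrivial ↥E₁) :
    g ∘ₗ (e.symm.toLinearMap ∘ₗ LinearMap.inl A ↥E₁ ↥E₂) ≠ 0 := by
  intro h
  set M := range (e.symm.toLinearMap ∘ₗ inl A E₁ E₂)
  set N := range (e.symm.toLinearMap ∘ₗ inr A E₁ E₂)
  have hMN : IsCompl M N := e.isCompl_range_symm_comp_inl_inr
  have hMg : M ≤ ker g := range_le_ker_iff.mpr h
  have hM : M ≠ ⊥ := by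
    rw [ne_eq, range_eq_bot]
    obtain ⟨a, ha⟩ := exists_ne (0 : E₁)
    exact fun h0 ↦ ha (by simpa using LinearMap.congr_fun h0 a)
  have hNg : Disjoint N (ker g) :=
    hX.disjoint_of_isCompl_of_le (LinearEquiv.ofInjective f hf ≪≫ₗ LinearEquiv.ofEq _ _ hexact)
      hMN hMg hM
  have hkerN : IsCompl (ker g) N := ⟨hNg.symm, hMN.codisjoint.mono_left hMg⟩
  exact hnonsplit (exists_rightInverse_of_isCompl_ker hg hkerN)

/-- In a non-split short exact sequence `0 → X → E → Y → 0` of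
finitely generated modules over an Artin algebra with `X` indecomposable,
for every direct sum decomposition `E ≅ E₁ ⊕ E₂` with `E₁` nonzero, the
coordinate morphism `g ∘ ι₁ : E₁ → Y` is nonzero. -/
theorem stmt0 (k : Type) [CommRing k] [IsArtinianRing k]
    (A : Type) [Ring A] [Algebra k A] [Module.Finite k A]
    (X E Y : ModuleCat.{0} A)
    (hXfg : Module.Finite A ↥X) (hEfg : Module.Finite A ↥E) (hYfg : Module.Finite A ↥Y)
    (f : ↥X →ₗ[A] ↥E) (g : ↥E →ₗ[A] ↥Y)
    (hf : Function.Injective f) (hg : Function.Surjective g)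
    (hexact : LinearMap.range f = LinearMap.ker g)
    (hnonsplit : ¬ ∃ s : ↥Y →ₗ[A] ↥E, g ∘ₗ s = LinearMap.id)
    (hX : IsIndec A X)
    (E₁ E₂ : ModuleCat.{0} A) (e : ↥E ≃ₗ[A] ↥E₁ × ↥E₂) (hE₁ : Nontrivial ↥E₁) :
    g ∘ₗ (e.symm.toLinearMap ∘ₗ LinearMap.inl A ↥E₁ ↥E₂) ≠ 0 :=
  stmt0_general A X E Y f g hf hg hexact hnonsplit hX E₁ E₂ e hE₁
end

section
/- Let 0 → X →f E →g Y → 0 be a non-split short exact sequence of finitely generated A-modules with Y indecomposable. Then for every direct sum decomposition E = E₁ ⊕ E₂ with E₁ nonzero, the coordinate morphism π₁∘f : X → E₁ (the composition of f with the projection onto E₁) is nonzero. -/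
/-! If `π₁ ∘ f = 0`, then `f` lands in `E₂`, so `Y ≅ E / f X ≅ E₁ ⊕ E₂ / f X`. Since `E₁ ≠ 0` and
`Y` is indecomposable, `f X = E₂`; the isomorphism `Y ≅ E₁` then yields a section of `g`
through the inclusion of `E₁`, contradicting non-splitness. -/

section SplitOff

variable {R : Type*} [Ring R] {X M₁ M₂ Y : Type*}
  [AddCommGroup X] [Module R X] [AddCommGroup M₁] [Module R M₁]
  [AddCommGroup M₂] [Module R M₂] [AddCommGroup Y] [Module R Y]

open LinearMap

theorem LinearMap.range_eq_ker_prodMap_mkQ_of_fst_comp_eq_zero {f : X →ₗ[R] M₁ × M₂}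
    (hf : fst R M₁ M₂ ∘ₗ f = 0) :
    range f = ker (prodMap (id : M₁ →ₗ[R] M₁) (range (snd R M₁ M₂ ∘ₗ f)).mkQ) := by
  have hf₁ (x : X) : (f x).1 = 0 := LinearMap.congr_fun hf x
  ext p
  simp only [mem_range, mem_ker, coe_prodMap, Prod.map, id_coe, id_eq, Submodule.mkQ_apply,
    Prod.mk_eq_zero, Submodule.Quotient.mk_eq_zero, comp_apply, snd_apply]
  constructor
  · rintro ⟨x, rfl⟩
    exact ⟨hf₁ x, x, rfl⟩
  · rintro ⟨hp₁, x, hx⟩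
    exact ⟨x, Prod.ext (by rw [hf₁, hp₁]) hx⟩

theorem LinearMap.exists_equiv_prod_quotient_of_fst_comp_eq_zero {f : X →ₗ[R] M₁ × M₂}
    {g : M₁ × M₂ →ₗ[R] Y} (hg : Function.Surjective g) (hexact : range f = ker g)
    (hf : fst R M₁ M₂ ∘ₗ f = 0) :
    ∃ ψ : Y ≃ₗ[R] M₁ × (M₂ ⧸ range (snd R M₁ M₂ ∘ₗ f)),
      ∀ p, ψ (g p) = (p.1, Submodule.Quotient.mk p.2) := by
  set θ := prodMap (id : M₁ →ₗ[R] M₁) (range (snd R M₁ M₂ ∘ₗ f)).mkQ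
  have hθ : Function.Surjective θ :=
    Function.surjective_id.prodMap (Submodule.mkQ_surjective _)
  have hker : ker g = ker θ := by
    rw [← hexact, range_eq_ker_prodMap_mkQ_of_fst_comp_eq_zero hf]
  refine ⟨(g.quotKerEquivOfSurjective hg).symm ≪≫ₗ Submodule.quotEquivOfEq _ _ hker ≪≫ₗ
    θ.quotKerEquivOfSurjective hθ, fun p => ?_⟩
  simp [θ]

theorem LinearMap.exists_rightInverse_of_fst_comp_eq_zero {f : X →ₗ[R] M₁ × M₂}
    {g : M₁ × M₂ →ₗ[R] Y} (hg : Function.Surjective g) (hexact : range f = ker g)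
    (hf : fst R M₁ M₂ ∘ₗ f = 0) [Subsingleton (M₂ ⧸ range (snd R M₁ M₂ ∘ₗ f))] :
    ∃ s : Y →ₗ[R] M₁ × M₂, g ∘ₗ s = id := by
  obtain ⟨ψ, hψ⟩ := exists_equiv_prod_quotient_of_fst_comp_eq_zero hg hexact hf
  refine ⟨inl R M₁ M₂ ∘ₗ fst R M₁ _ ∘ₗ ψ.toLinearMap, LinearMap.ext fun y => ψ.injective ?_⟩
  rw [comp_apply, hψ]
  exact Prod.ext rfl (Subsingleton.elim _ _)

end SplitOff

theorem IsIndec.subsingleton_of_equiv_prod {A : Type} [Ring A] {M : ModuleCat.{0} A}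
    (hM : IsIndec A M) {N₁ N₂ : Type} [AddCommGroup N₁] [Module A N₁] [AddCommGroup N₂]
    [Module A N₂] [Nontrivial N₁] (e : M ≃ₗ[A] N₁ × N₂) : Subsingleton N₂ := by
  by_contra h
  rw [not_subsingleton_iff_nontrivial] at h
  exact (hM.2 (.of A N₁) (.of A N₂) ‹_› h).false e

theorem stmt1_general (A : Type) [Ring A]
    (X E Y : ModuleCat.{0} A)
    (f : ↥X →ₗ[A] ↥E) (g : ↥E →ₗ[A] ↥Y)
    (hg : Function.Surjective g)
    (hexact : LinearMap.range f = LinearMap.ker g)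
    (hnonsplit : ¬ ∃ s : ↥Y →ₗ[A] ↥E, g ∘ₗ s = LinearMap.id)
    (hY : IsIndec A Y)
    (E₁ E₂ : ModuleCat.{0} A) (e : ↥E ≃ₗ[A] ↥E₁ × ↥E₂) (hE₁ : Nontrivial ↥E₁) :
    LinearMap.fst A ↥E₁ ↥E₂ ∘ₗ (e.toLinearMap ∘ₗ f) ≠ 0 := by
  intro h0
  set g' := g ∘ₗ e.symm.toLinearMap
  have hg' : Function.Surjective g' := hg.comp e.symm.surjective
  have hexact' : LinearMap.range (e.toLinearMap ∘ₗ f) = LinearMap.ker g' := by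
    rw [LinearMap.range_comp, hexact, LinearMap.ker_comp, Submodule.map_equiv_eq_comap_symm]
  obtain ⟨ψ, -⟩ := LinearMap.exists_equiv_prod_quotient_of_fst_comp_eq_zero hg' hexact' h0
  have := hY.subsingleton_of_equiv_prod ψ
  obtain ⟨s, hs⟩ := LinearMap.exists_rightInverse_of_fst_comp_eq_zero hg' hexact' h0
  exact hnonsplit ⟨e.symm.toLinearMap ∘ₗ s, hs⟩

/-- In a non-split short exact sequence `0 → X → E → Y → 0` of
finitely generated modules over an Artin algebra with `Y` indecomposable,
for every direct sum decomposition `E ≅ E₁ ⊕ E₂` with `E₁` nonzero, the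
coordinate morphism `π₁ ∘ f : X → E₁` is nonzero. -/
theorem stmt1 (k : Type) [CommRing k] [IsArtinianRing k]
    (A : Type) [Ring A] [Algebra k A] [Module.Finite k A]
    (X E Y : ModuleCat.{0} A)
    (hXfg : Module.Finite A ↥X) (hEfg : Module.Finite A ↥E) (hYfg : Module.Finite A ↥Y)
    (f : ↥X →ₗ[A] ↥E) (g : ↥E →ₗ[A] ↥Y)
    (hf : Function.Injective f) (hg : Function.Surjective g)
    (hexact : LinearMap.range f = LinearMap.ker g)
    (hnonsplit : ¬ ∃ s : ↥Y →ₗ[A] ↥E, g ∘ₗ s = LinearMap.id)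
    (hY : IsIndec A Y)
    (E₁ E₂ : ModuleCat.{0} A) (e : ↥E ≃ₗ[A] ↥E₁ × ↥E₂) (hE₁ : Nontrivial ↥E₁) :
    LinearMap.fst A ↥E₁ ↥E₂ ∘ₗ (e.toLinearMap ∘ₗ f) ≠ 0 :=
  stmt1_general A X E Y f g hg hexact hnonsplit hY E₁ E₂ e hE₁
end

section
/- Let C be a torsion-free class in mod A and assume that every indecomposable projective finitely generated A-module belongs to L_C, i.e. every predecessor in ind A of an indecomposable projective module lies in C. Then every indecomposable finitely generated A-module X satisfies X ∈ C or id X ≤ 1. -/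
/-! Embed `X` into an injective module `I`. If `I ⧸ X` is injective, then `id X ≤ 1`.
Otherwise Baer's criterion fails for `I ⧸ X` at some left ideal `J`, and pulling back along
`J → I ⧸ X` gives a non-split extension `0 → X → E → J → 0`. Since `E` has finite length, it has
an indecomposable summand `Z` on which `X` survives; `Z` also maps nontrivially to `J`, since
otherwise `Z` would be a summand of the indecomposable `X`, hence `X ≅ Z`, and the extension would
split. Projecting `Z → J ⊆ A` to a suitable indecomposable summand `P` of `A` gives a path
`X → Z → P` ending at an indecomposable projective, so `X` lies in `C`. -/

open LinearMap Function

section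

variable {A : Type} [Ring A]

theorem IsIndec.subsingleton_or_subsingleton {M : ModuleCat.{0} A} (hM : IsIndec A M)
    {N₁ N₂ : Type} [AddCommGroup N₁] [Module A N₁] [AddCommGroup N₂] [Module A N₂]
    (e : M ≃ₗ[A] N₁ × N₂) : Subsingleton N₁ ∨ Subsingleton N₂ := by
  by_contra! h
  exact (hM.2 (ModuleCat.of A N₁) (ModuleCat.of A N₂) h.1 h.2).false e

theorem IsIndec.bijective_of_comp_eq_id {M : ModuleCat.{0} A} (hM : IsIndec A M)
    {Z : Type} [AddCommGroup Z] [Module A Z] [Nontrivial Z] {i : Z →ₗ[A] M} {p : M →ₗ[A] Z}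
    (hpi : p ∘ₗ i = .id) : Bijective p := by
  have hp : Surjective p := fun z => ⟨i z, LinearMap.congr_fun hpi z⟩
  have hsplit := ((exact_subtype_ker_map p).split_tfae (ker p).injective_subtype hp).out 0 2
  obtain ⟨e, -, -⟩ := hsplit.mp ⟨i, hpi⟩
  refine ⟨?_, hp⟩
  rcases hM.subsingleton_or_subsingleton e with h | h
  · exact ker_eq_bot.mp (Submodule.eq_bot_of_subsingleton)
  · exact (not_subsingleton Z h).elim

theorem range_comp_lt_range_of_comp_eq_id {E Z : Type} [AddCommGroup E] [Module A E]
    [AddCommGroup Z] [Module A Z] {ι : Z →ₗ[A] E} {π : E →ₗ[A] Z} (hπι : π ∘ₗ ι = .id) {N : Type}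
    [AddCommGroup N] [Module A N] {j : N →ₗ[A] Z} (hj : ¬Surjective j) :
    range (ι ∘ₗ j) < range ι := by
  have hι : Injective ι := LeftInverse.injective (LinearMap.congr_fun hπι)
  rw [range_comp, ← Submodule.map_top ι]
  exact Submodule.map_strictMono_of_injective hι (lt_top_iff_ne_top.mpr (mt range_eq_top.mp hj))

theorem LinearEquiv.not_surjective_symm_comp_inl {Z N₁ N₂ : Type} [AddCommGroup Z]
    [Module A Z] [AddCommGroup N₁] [Module A N₁] [AddCommGroup N₂] [Module A N₂] [Nontrivial N₂]
    (e : Z ≃ₗ[A] N₁ × N₂) :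
    ¬Surjective (e.symm.toLinearMap ∘ₗ inl A N₁ N₂) := by
  intro h
  obtain ⟨y, hy⟩ := exists_ne (0 : N₂)
  obtain ⟨x, hx⟩ := h (e.symm (0, y))
  exact hy (congr_arg Prod.snd (e.symm.injective hx)).symm

theorem exists_isIndec_retract_comp_ne_zero {E X : Type} [AddCommGroup E] [Module A E]
    [IsArtinian A E] [AddCommGroup X] [Module A X] {h : X →ₗ[A] E} (hh : h ≠ 0) :
    ∃ (Z : ModuleCat.{0} A) (ι : Z →ₗ[A] E) (π : E →ₗ[A] Z),
      IsIndec A Z ∧ π ∘ₗ ι = .id ∧ π ∘ₗ h ≠ 0 := by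
  -- a retract with minimal image on which `h` survives is indecomposable: a splitting
  -- `Z ≃ N₁ × N₂` yields two retracts with smaller image, and `h` survives on one of them
  let S : Set (Submodule A E) :=
    {R | ∃ (Z : ModuleCat.{0} A) (ι : Z →ₗ[A] E) (π : E →ₗ[A] Z),
      π ∘ₗ ι = .id ∧ π ∘ₗ h ≠ 0 ∧ range ι = R}
  obtain ⟨_, ⟨Z, ι, π, hπι, hπh, rfl⟩, hmin⟩ :=
    wellFounded_lt.has_min S ⟨⊤, ModuleCat.of A E, .id, .id, rfl, hh, range_id⟩
  have hπι' : ∀ z, π (ι z) = z := LinearMap.congr_fun hπι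
  have hfst : ∀ {N₁ N₂ : ModuleCat.{0} A} [Nontrivial N₂] (e : Z ≃ₗ[A] N₁ × N₂),
      fst A N₁ N₂ ∘ₗ e.toLinearMap ∘ₗ π ∘ₗ h = 0 := by
    intro N₁ N₂ _ e
    by_contra hne
    refine hmin _ ⟨N₁, ι ∘ₗ e.symm.toLinearMap ∘ₗ inl A N₁ N₂,
      fst A N₁ N₂ ∘ₗ e.toLinearMap ∘ₗ π, ?_, ?_, rfl⟩
      (range_comp_lt_range_of_comp_eq_id hπι e.not_surjective_symm_comp_inl)
    · ext x
      simp [hπι']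
    · simpa only [LinearMap.comp_assoc] using hne
  refine ⟨Z, ι, π, ⟨?_, fun N₁ N₂ _ _ => ⟨fun e => hπh ?_⟩⟩, hπι, hπh⟩
  · obtain ⟨x, hx⟩ := not_forall.mp (mt LinearMap.ext hπh)
    exact nontrivial_of_ne _ _ hx
  ext x
  apply e.injective
  ext
  · simpa using congr($(hfst e) x)
  · simpa using congr($(hfst (e.trans (LinearEquiv.prodComm A N₁ N₂))) x)

theorem exists_isIndec_between_of_not_split {X : ModuleCat.{0} A}
    (hX : IsIndec A X) {E N : Type} [AddCommGroup E] [Module A E] [IsArtinian A E]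
    [AddCommGroup N] [Module A N] {f : X →ₗ[A] E} {g : E →ₗ[A] N} (hf : Injective f)
    (hg : Surjective g) (hfg : Exact f g) (hns : ∀ s : N →ₗ[A] E, g ∘ₗ s ≠ .id) :
    ∃ Z : ModuleCat.{0} A, IsIndec A Z ∧ (∃ π : E →ₗ[A] Z, Surjective π) ∧
      (∃ u : X →ₗ[A] Z, u ≠ 0) ∧ ∃ v : Z →ₗ[A] N, v ≠ 0 := by
  have hf0 : f ≠ 0 := by
    have := hX.1
    obtain ⟨x, hx⟩ := exists_ne (0 : X)
    exact fun h0 => hx (hf (by simp [h0]))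
  obtain ⟨Z, ι, π, hZ, hπι, hπf⟩ := exists_isIndec_retract_comp_ne_zero hf0
  have hπι' : ∀ z, π (ι z) = z := LinearMap.congr_fun hπι
  refine ⟨Z, hZ, ⟨π, fun z => ⟨ι z, hπι' z⟩⟩, ⟨π ∘ₗ f, hπf⟩, g ∘ₗ ι, fun hgι => ?_⟩
  -- `ι` factors through `f`, so `Z` is a retract of `X` along `π ∘ f`, which is then an iso
  have hιf : ∀ z, ι z ∈ range f := fun z => hfg.linearMap_ker_eq ▸ congr($hgι z)
  let ι' : Z →ₗ[A] X :=
    (LinearEquiv.ofInjective f hf).symm.toLinearMap ∘ₗ ι.codRestrict _ hιf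
  have hfι' : ∀ z, f (ι' z) = ι z := fun z => by simp [ι']
  have := hZ.1
  have hbij : Bijective (π ∘ₗ f) :=
    hX.bijective_of_comp_eq_id (i := ι') (LinearMap.ext fun z => by simp [hfι', hπι'])
  let r : E →ₗ[A] X := (LinearEquiv.ofBijective _ hbij).symm.toLinearMap ∘ₗ π
  have hr : r ∘ₗ f = .id :=
    LinearMap.ext fun x => (LinearEquiv.ofBijective _ hbij).symm_apply_apply x
  have hsplit := (hfg.split_tfae hf hg).out 1 0
  obtain ⟨s, hs⟩ := hsplit.mp ⟨r, hr⟩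
  exact hns s hs

theorem exists_not_split_of_not_injective_quotient {X I : Type} [AddCommGroup X]
    [Module A X] [AddCommGroup I] [Module A I] [Module.Injective A I] {f : X →ₗ[A] I}
    (hf : Injective f) (hQ : ¬Module.Injective A (I ⧸ range f)) :
    ∃ (J : Ideal A) (E : Submodule A (I × J)) (f' : X →ₗ[A] E) (g' : E →ₗ[A] J),
      Injective f' ∧ Surjective g' ∧ Exact f' g' ∧
        ∀ s : J →ₗ[A] E, g' ∘ₗ s ≠ .id := by
  have hnB : ¬Module.Baer A (I ⧸ range f) := mt Module.Baer.injective hQ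
  simp only [Module.Baer, not_forall, not_exists] at hnB
  obtain ⟨J, φ, hφ⟩ := hnB
  set q := (range f).mkQ
  -- `E` is the pullback of `q` and `φ`
  let E := eqLocus (q ∘ₗ fst A I J) (φ ∘ₗ snd A I J)
  have hfE : ∀ x, (inl A I J ∘ₗ f) x ∈ E := fun x => by
    simp [E, q, mem_eqLocus]
  refine ⟨J, E, (inl A I J ∘ₗ f).codRestrict E hfE, snd A I J ∘ₗ E.subtype,
    fun a b hab => ?_, fun j => ?_, fun y => ⟨fun hy => ?_, ?_⟩, fun s hs => ?_⟩
  · exact hf congr(($hab : I × J).1)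
  · obtain ⟨i, hi⟩ := (range f).mkQ_surjective (φ j)
    exact ⟨⟨(i, j), hi⟩, rfl⟩
  · replace hy : (y : I × J).2 = 0 := hy
    have hy1 : q (y : I × J).1 = 0 := by
      simpa [hy] using mem_eqLocus.mp y.2
    obtain ⟨x, hx⟩ := (Submodule.Quotient.mk_eq_zero _).mp hy1
    exact ⟨x, Subtype.ext (Prod.ext hx hy.symm)⟩
  · rintro ⟨x, rfl⟩
    rfl
  -- a section `s` lifts `φ` through `q` to `fst ∘ s : J → I`, which extends to `A`
  · obtain ⟨Ψ, hΨ⟩ := Module.Injective.extension_property A I J A J.subtype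
      J.injective_subtype (fst A I J ∘ₗ E.subtype ∘ₗ s)
    obtain ⟨x, hx, hne⟩ := hφ (q ∘ₗ Ψ)
    have hsx : ((s ⟨x, hx⟩ : I × J)).2 = ⟨x, hx⟩ := congr($hs ⟨x, hx⟩)
    refine hne ?_
    calc q (Ψ x) = q (s ⟨x, hx⟩ : I × J).1 := congr(q $(LinearMap.congr_fun hΨ ⟨x, hx⟩))
      _ = φ (s ⟨x, hx⟩ : I × J).2 := mem_eqLocus.mp (s ⟨x, hx⟩).2
      _ = φ ⟨x, hx⟩ := by rw [hsx]

theorem exists_isIndec_projective_of_ne_zero {Z : Type} [IsArtinianRing A]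
    [AddCommGroup Z] [Module A Z] {h : Z →ₗ[A] A} (hh : h ≠ 0) :
    ∃ P : ModuleCat.{0} A, IsIndec A P ∧ Module.Projective A P ∧ Module.Finite A P ∧
      ∃ u : Z →ₗ[A] P, u ≠ 0 := by
  obtain ⟨P, ι, π, hP, hπι, hπh⟩ := exists_isIndec_retract_comp_ne_zero hh
  exact ⟨P, hP, .of_split ι π hπι,
    .of_surjective π fun p => ⟨ι p, LinearMap.congr_fun hπι p⟩, _, hπh⟩

theorem ModuleCat.exists_injective_linearMap_to_injective (X : ModuleCat.{0} A) :
    ∃ (I : ModuleCat.{0} A) (f : X →ₗ[A] I), Module.Injective A I ∧ Injective f := by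
  have := ModuleCat.enoughInjectives.{0} A
  let I := CategoryTheory.Injective.under X
  have : CategoryTheory.Injective (ModuleCat.of A I) := inferInstanceAs (CategoryTheory.Injective I)
  exact ⟨I, (CategoryTheory.Injective.ι X).hom, Module.injective_module_of_injective_object A I,
    (ModuleCat.mono_iff_injective _).mp inferInstance⟩

end

theorem stmt14_general (k : Type) [CommRing k] [IsArtinianRing k]
    (A : Type) [Ring A] [Algebra k A] [Module.Finite k A]
    (C : Set (ModuleCat.{0} A))
    (hP : ∀ P : ModuleCat.{0} A, IsIndec A P → Module.Finite A ↥P →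
      Module.Projective A ↥P → ∀ Y : ModuleCat.{0} A, IsPredecessor A Y P → Y ∈ C) :
    ∀ X : ModuleCat.{0} A, IsIndec A X → Module.Finite A ↥X →
      X ∈ C ∨ idLE A 1 X := by
  intro X hX hXfg
  have : IsArtinianRing A := isArtinian_of_tower k inferInstance
  obtain ⟨I, f, hI, hf⟩ := X.exists_injective_linearMap_to_injective
  by_cases hQ : Module.Injective A (I ⧸ range f)
  · exact Or.inr ⟨I, f, hI, hf, hQ⟩
  obtain ⟨J, E, f', g', hf', hg', hfg', hns⟩ := exists_not_split_of_not_injective_quotient hf hQ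
  have : IsArtinian A E := isArtinian_of_range_eq_ker f' g' hfg'.linearMap_ker_eq.symm
  have : Module.Finite A E := ((IsArtinianRing.tfae A E).out 2 0).mp this
  obtain ⟨Z, hZ, ⟨π, hπ⟩, ⟨u, hu⟩, ⟨v, hv⟩⟩ :=
    exists_isIndec_between_of_not_split hX hf' hg' hfg' hns
  have hZfg : Module.Finite A Z := .of_surjective π hπ
  have hv' : J.subtype ∘ₗ v ≠ 0 := fun h0 =>
    hv (LinearMap.ext fun z => Subtype.ext congr($h0 z))
  obtain ⟨P, hPind, hPproj, hPfg, w, hw⟩ := exists_isIndec_projective_of_ne_zero hv'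
  exact Or.inl <| hP P hPind hPfg hPproj X ⟨hX, hXfg,
    .head ⟨hX, hXfg, hZ, hZfg, u, hu⟩ (.single ⟨hZ, hZfg, hPind, hPfg, w, hw⟩)⟩

/-- Let `C` be a torsion-free class such that every indecomposable
projective finitely generated module belongs to `L_C` (all its predecessors in
`ind A` lie in `C`). Then every indecomposable finitely generated module lies
in `C` or has injective dimension at most `1`. -/
theorem stmt14 (k : Type) [CommRing k] [IsArtinianRing k]
    (A : Type) [Ring A] [Algebra k A] [Module.Finite k A]
    (C : Set (ModuleCat.{0} A)) (hC : IsTorsionFreeClass A C)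
    (hP : ∀ P : ModuleCat.{0} A, IsIndec A P → Module.Finite A ↥P →
      Module.Projective A ↥P → ∀ Y : ModuleCat.{0} A, IsPredecessor A Y P → Y ∈ C) :
    ∀ X : ModuleCat.{0} A, IsIndec A X → Module.Finite A ↥X →
      X ∈ C ∨ idLE A 1 X :=
  stmt14_general k A C hP
end
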